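/- For every 0 < α < 1 and all finitely supported sequences f, g : ℕ₀ → ℂ: q_α(f*g) ≤ (2^{α+1}·(1 + (1-α)/(2(1+α)))^α − 1) · q_α(f) · q_α(g). -/

import Mathlib

/-- The Cesàro kernel `k^α(n) = Γ(n+α)/(Γ(α)·Γ(n+1))`. -/
noncomputable def cesK (α : ℝ) (n : ℕ) : ℝ :=
  Real.Gamma ((n : ℝ) + α) / (Real.Gamma α * Real.Gamma ((n : ℝ) + 1))

/-- The Weyl sum of order `α`: `W^{-α}f(n) = ∑_{j=n}^∞ k^α(j-n)·f(j)`. -/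
noncomputable def weylSum (α : ℝ) (f : ℕ → ℂ) : ℕ → ℂ :=
  fun n => ∑ᶠ j : ℕ, (cesK α j : ℂ) * f (j + n)

/-- The forward difference operator `Δh(n) = h(n+1) - h(n)`. -/
def fdiff (f : ℕ → ℂ) : ℕ → ℂ := fun n => f (n + 1) - f n

/-- The Weyl difference of order `α > 0`:
`W^α f(n) = (-1)^m Δ^m W^{-(m-α)} f(n)` with `m = [α]+1`; and `W^0 f = f`. -/
noncomputable def weylDiff (α : ℝ) (f : ℕ → ℂ) : ℕ → ℂ :=
  if α = 0 then f
  else fun n => (-1 : ℂ) ^ (⌊α⌋₊ + 1) * fdiff^[⌊α⌋₊ + 1] (weylSum ((⌊α⌋₊ : ℝ) + 1 - α) f) n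

/-- Convolution of sequences: `(f*g)(n) = ∑_{j=0}^n f(n-j)·g(j)`. -/
noncomputable def conv (f g : ℕ → ℂ) (n : ℕ) : ℂ :=
  ∑ j ∈ Finset.range (n + 1), f (n - j) * g j

/-- `q_α(f) = ∑_{n=0}^∞ k^{α+1}(n)·|W^α f(n)|`, a finite sum for finitely supported `f`. -/
noncomputable def qA (α : ℝ) (f : ℕ → ℂ) : ℝ :=
  ∑ᶠ n : ℕ, cesK (α + 1) n * ‖weylDiff α f n‖


/-!
For `0 < α < 1` the Weyl difference is a correlation with the coefficients of `(1 - X) ^ α`,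
`W^α f(n) = ∑ r, c_r f(r + n)`, and `(1 - X) ^ α` inverts `∑ k^α(n) X^n = (1 - X) ^ (-α)`.
Hence a finitely supported `f` is `∑ i, W^α f(i) e_i` with `e_i(n) = k^α(i - n)` for `n ≤ i`, and
`W^α(f * g)(n) = ∑ i j, W^α f(i) W^α g(j) w(n, i, j)` with `w(n, i, j) = W^α(e_i * e_j)(n)`.
Reversing the order of the coefficients turns `e_i * e_j` into the product of two truncations of
`(1 - X) ^ (-α)`, which gives `w(n, i, j) = ±k^α(i + j - n)` or `0` according to the position of
`i + j - n` relative to `i` and `j`. It remains to bound `∑ n, k^{α+1}(n) |w(n, i, j)|` by the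
constant times `k^{α+1}(i) k^{α+1}(j)`: this rests on `k^α(j + 1) = α/(j + 1) · k^{α+1}(j)` and on
`k^{α+1}(j + t) ≤ ((3 + α)/(1 + α)) ^ α · k^{α+1}(j)` for `t ≤ j + 1`, a telescoping product of
instances of `artanh (α s) ≤ α artanh s`.
-/

open Finset PowerSeries

section CesaroKernel

variable {a : ℝ}

lemma cesK_pos (ha : 0 < a) (n : ℕ) : 0 < cesK a n := by
  have := Real.Gamma_pos_of_pos ha
  have := Real.Gamma_pos_of_pos (by positivity : (0 : ℝ) < n + 1)
  have := Real.Gamma_pos_of_pos (by positivity : (0 : ℝ) < n + a)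
  unfold cesK
  positivity

lemma cesK_one (n : ℕ) : cesK 1 n = 1 := by
  have := (Real.Gamma_pos_of_pos (by positivity : (0 : ℝ) < n + 1)).ne'
  simp [cesK, this]

lemma cesK_succ (ha : 0 < a) (n : ℕ) :
    cesK a (n + 1) = cesK a n * ((n + a) / (n + 1)) := by
  have h₁ : Real.Gamma (((n + 1 : ℕ) : ℝ) + a) = (n + a) * Real.Gamma (n + a) := by
    rw [Nat.cast_succ, add_right_comm, Real.Gamma_add_one (by positivity)]
  have h₂ : Real.Gamma (((n + 1 : ℕ) : ℝ) + 1) = (n + 1) * Real.Gamma (n + 1) := by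
    rw [Nat.cast_succ, Real.Gamma_add_one (by positivity)]
  have := (Real.Gamma_pos_of_pos ha).ne'
  have := (Real.Gamma_pos_of_pos (by positivity : (0 : ℝ) < n + 1)).ne'
  simp only [cesK, h₁, h₂]
  field_simp

lemma cesK_succ_eq_mul_cesK_add_one (ha : 0 < a) (n : ℕ) :
    cesK a (n + 1) = a / (n + 1) * cesK (a + 1) n := by
  have h₁ : Real.Gamma (((n + 1 : ℕ) : ℝ) + a) = Real.Gamma (n + (a + 1)) := by
    push_cast; ring_nf
  have h₂ : Real.Gamma (((n + 1 : ℕ) : ℝ) + 1) = (n + 1) * Real.Gamma (n + 1) := by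
    rw [Nat.cast_succ, Real.Gamma_add_one (by positivity)]
  have := (Real.Gamma_pos_of_pos ha).ne'
  have := (Real.Gamma_pos_of_pos (by positivity : (0 : ℝ) < n + 1)).ne'
  simp only [cesK, h₁, h₂, Real.Gamma_add_one ha.ne']
  field_simp

lemma cesK_eq_multichoose (ha : 0 < a) (n : ℕ) : cesK a n = Ring.multichoose a n := by
  have hfac : cesK a n * n.factorial = (ascPochhammer ℝ n).eval a := by
    induction n with
    | zero => simp [cesK, (Real.Gamma_pos_of_pos ha).ne']
    | succ n ih =>
      rw [cesK_succ ha, ascPochhammer_succ_eval, ← ih, Nat.factorial_succ]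
      push_cast
      field_simp
      ring
  have := Ring.factorial_nsmul_multichoose_eq_ascPochhammer a n
  rw [Polynomial.ascPochhammer_smeval_eq_eval, ← hfac, nsmul_eq_mul, mul_comm] at this
  exact (mul_right_cancel₀ (by positivity) this).symm

lemma cesK_antitone (ha : 0 < a) (ha₁ : a ≤ 1) : Antitone (cesK a) := by
  refine antitone_nat_of_succ_le fun n => ?_
  rw [cesK_succ ha]
  have : (n + a) / (n + 1) ≤ 1 := (div_le_one (by positivity)).2 (by linarith)
  exact mul_le_of_le_one_right (cesK_pos ha n).le this

end CesaroKernel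

noncomputable def cesSeries (A : Type*) [CommRing A] [Algebra ℝ A] (a : ℝ) : A⟦X⟧ :=
  PowerSeries.mk fun n => algebraMap ℝ A (cesK a n)

section CesaroSeries

variable {A : Type*} [CommRing A] [Algebra ℝ A] {a b : ℝ}

@[simp]
lemma coeff_cesSeries (a : ℝ) (n : ℕ) : coeff n (cesSeries A a) = algebraMap ℝ A (cesK a n) :=
  coeff_mk _ _

lemma cesSeries_eq_rescale_binomialSeries (ha : 0 < a) :
    cesSeries A a = rescale (-1 : A) (binomialSeries A (-a)) := by
  ext n
  rw [coeff_cesSeries, coeff_rescale, binomialSeries_coeff, Ring.choose_neg',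
    ← cesK_eq_multichoose ha, Units.smul_def, Int.coe_negOnePow_natCast, zsmul_eq_mul,
    Algebra.smul_def, mul_one, map_mul]
  push_cast
  rw [← mul_assoc, ← mul_pow]
  simp

lemma cesSeries_add (ha : 0 < a) (hb : 0 < b) :
    cesSeries A (a + b) = cesSeries A a * cesSeries A b := by
  rw [cesSeries_eq_rescale_binomialSeries ha, cesSeries_eq_rescale_binomialSeries hb,
    cesSeries_eq_rescale_binomialSeries (add_pos ha hb), neg_add, binomialSeries_add, map_mul]

lemma one_sub_X_mul_cesSeries_one : (1 - X) * cesSeries A 1 = 1 := by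
  ext n
  cases n <;> simp [sub_mul, cesK_one, cesSeries]

end CesaroSeries

section CesaroSums

variable {a : ℝ}

lemma sum_range_succ_cesK (ha : 0 < a) (n : ℕ) :
    ∑ m ∈ range (n + 1), cesK a m = cesK (a + 1) n := by
  have := congr_arg (coeff n) (cesSeries_add (A := ℝ) ha one_pos)
  simp only [coeff_cesSeries, coeff_mul, Algebra.algebraMap_self, RingHom.id_apply, cesK_one,
    mul_one] at this
  rw [this, Nat.sum_antidiagonal_eq_sum_range_succ_mk]

lemma sum_range_cesK (ha : 0 < a) (i : ℕ) :
    ∑ m ∈ range i, cesK a m = i / a * cesK a i := by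
  cases i with
  | zero => simp
  | succ i =>
    rw [sum_range_succ_cesK ha, cesK_succ_eq_mul_cesK_add_one ha]
    push_cast
    field_simp

end CesaroSums

lemma log_one_add_mul_sub_log_one_sub_mul_le {t a : ℝ} (ht0 : 0 ≤ t) (ht1 : t < 1) (ha0 : 0 ≤ a)
    (ha1 : a ≤ 1) :
    Real.log (1 + a * t) - Real.log (1 - a * t) ≤ a * (Real.log (1 + t) - Real.log (1 - t)) := by
  have hat : |a * t| < 1 := by rw [abs_of_nonneg (by positivity)]; nlinarith
  refine hasSum_le (fun k => ?_) (Real.hasSum_log_sub_log_of_abs_lt_one hat)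
    ((Real.hasSum_log_sub_log_of_abs_lt_one (by rwa [abs_of_nonneg ht0])).mul_left a)
  have hpow : a ^ (2 * k + 1) ≤ a := pow_le_of_le_one ha0 ha1 (by omega)
  rw [mul_pow, mul_left_comm]
  gcongr

section CesaroGrowth

variable {α : ℝ}

lemma add_div_self_le_rpow (h0 : 0 < α) (h1 : α ≤ 1) {x : ℝ} (hx : 1 ≤ x) :
    (x + α) / x ≤ ((x + (1 + α) / 2) / (x - (1 - α) / 2)) ^ α := by
  have hx' : 0 < 2 * x + α := by linarith
  set t : ℝ := 1 / (2 * x + α) with ht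
  have ht0 : 0 < t := by positivity
  have ht1 : t < 1 := (div_lt_one hx').2 (by linarith)
  have hαt : α * t < 1 := by nlinarith
  have hlhs : (x + α) / x = (1 + α * t) / (1 - α * t) := by
    rw [ht]; field_simp; ring
  have hrhs : (x + (1 + α) / 2) / (x - (1 - α) / 2) = (1 + t) / (1 - t) := by
    rw [ht]; field_simp; ring
  rw [hlhs, hrhs, Real.le_rpow_iff_log_le (by apply div_pos <;> nlinarith)
    (by apply div_pos <;> linarith), Real.log_div (by nlinarith) (by linarith),
    Real.log_div (by linarith) (by linarith)]
  exact log_one_add_mul_sub_log_one_sub_mul_le ht0.le ht1 h0.le h1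

lemma one_add_le_rpow (h0 : 0 < α) (h1 : α ≤ 1) : 1 + α ≤ ((3 + α) / (1 + α)) ^ α := by
  have hα : 1 + α ≠ 0 := by linarith
  have := add_div_self_le_rpow h0 h1 le_rfl
  rwa [div_one, show (1 + (1 + α) / 2) / (1 - (1 - α) / 2) = (3 + α) / (1 + α) by
    rw [div_eq_div_iff (by linarith) hα]; ring] at this

lemma cesK_add_one_add_le (h0 : 0 < α) (h1 : α ≤ 1) (j t : ℕ) :
    cesK (α + 1) (j + t) ≤ ((j + t + (1 + α) / 2) / (j + (1 + α) / 2)) ^ α * cesK (α + 1) j := by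
  induction t with
  | zero => simp [div_self (by positivity : (j : ℝ) + (1 + α) / 2 ≠ 0)]
  | succ t ih =>
    have hpos : (0 : ℝ) < j + t + (1 + α) / 2 := by positivity
    have hstep : (j + t + (α + 1)) / (j + t + 1) ≤
        ((j + t + 1 + (1 + α) / 2) / (j + t + (1 + α) / 2)) ^ α := by
      have := add_div_self_le_rpow h0 h1 (x := j + t + 1) (by linarith [hpos])
      rwa [show (j : ℝ) + t + 1 + α = j + t + (α + 1) by ring,
        show (j : ℝ) + t + 1 - (1 - α) / 2 = j + t + (1 + α) / 2 by ring] at this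
    have hk := cesK_pos (by linarith : 0 < α + 1) j
    rw [← add_assoc, cesK_succ (by linarith)]
    push_cast
    rw [show (j : ℝ) + (t + 1) = j + t + 1 by ring]
    calc cesK (α + 1) (j + t) * ((j + t + (α + 1)) / (j + t + 1))
        ≤ ((j + t + (1 + α) / 2) / (j + (1 + α) / 2)) ^ α * cesK (α + 1) j *
            ((j + t + 1 + (1 + α) / 2) / (j + t + (1 + α) / 2)) ^ α := by
          gcongr
      _ = ((j + t + 1 + (1 + α) / 2) / (j + (1 + α) / 2)) ^ α * cesK (α + 1) j := by
          rw [mul_right_comm, ← Real.mul_rpow (by positivity) (by positivity), div_mul_div_comm,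
            mul_comm (_ + _ + _), mul_div_mul_right _ _ hpos.ne']

lemma cesK_add_one_add_le_of_le (h0 : 0 < α) (h1 : α ≤ 1) {j t : ℕ} (ht : t ≤ j + 1) :
    cesK (α + 1) (j + t) ≤ ((3 + α) / (1 + α)) ^ α * cesK (α + 1) j := by
  refine (cesK_add_one_add_le h0 h1 j t).trans (mul_le_mul_of_nonneg_right ?_
    (cesK_pos (by linarith) j).le)
  have ht' : (t : ℝ) ≤ j + 1 := by exact_mod_cast ht
  have hj : (0 : ℝ) ≤ j := j.cast_nonneg
  refine Real.rpow_le_rpow (by positivity) ?_ h0.le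
  rw [div_le_div_iff₀ (by positivity) (by positivity)]
  nlinarith

end CesaroGrowth

lemma exists_forall_gt_eq_zero {M : Type*} [Zero M] {f : ℕ → M}
    (hf : (Function.support f).Finite) : ∃ N, ∀ m > N, f m = 0 := by
  obtain ⟨N, hN⟩ := hf.bddAbove
  exact ⟨N, fun m hm => Function.notMem_support.1 fun h => (hN h).not_gt hm⟩

lemma conv_eq_zero_of_gt {f g : ℕ → ℂ} {N M : ℕ} (hf : ∀ m > N, f m = 0)
    (hg : ∀ m > M, g m = 0) : ∀ m > N + M, conv f g m = 0 := fun m hm =>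
  sum_eq_zero fun q hq => by
    by_cases hqM : q ≤ M
    · rw [hf (m - q) (by omega), zero_mul]
    · rw [hg q (by omega), mul_zero]

open Polynomial in
lemma conv_coeff (P Q : ℂ[X]) : conv P.coeff Q.coeff = (P * Q).coeff := by
  ext m
  rw [conv, mul_comm, Polynomial.coeff_mul,
    Nat.sum_antidiagonal_eq_sum_range_succ fun k l => Q.coeff k * P.coeff l]
  exact sum_congr rfl fun _ _ => mul_comm _ _

section Reflect

open Polynomial

variable {R : Type*} [Semiring R]

lemma coeff_reflect_eq_zero_of_gt {d : ℕ} {Q : R[X]} (hQ : Q.natDegree ≤ d) :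
    ∀ m > d, (reflect d Q).coeff m = 0 := fun m hm => by
  rw [coeff_reflect, revAt_eq_self_of_lt hm, coeff_eq_zero_of_natDegree_lt (by omega)]

lemma exists_natDegree_le_coeff_reflect_eq {f : ℕ → R} {N : ℕ} (hf : ∀ m > N, f m = 0) :
    ∃ Q : R[X], Q.natDegree ≤ N ∧ (reflect N Q).coeff = f := by
  set Q : R[X] := ∑ u ∈ range (N + 1), monomial u (f (N - u))
  have hQ : ∀ u, Q.coeff u = if u ≤ N then f (N - u) else 0 := fun u => by
    simp [Q, finsetSum_coeff, Polynomial.coeff_monomial]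
  refine ⟨Q, natDegree_le_iff_coeff_eq_zero.2 fun u hu => by simp [hQ, hu.not_ge], ?_⟩
  ext n
  rw [coeff_reflect, hQ]
  by_cases hn : n ≤ N
  · rw [revAt_le hn, if_pos (Nat.sub_le _ _), Nat.sub_sub_self hn]
  · rw [revAt_eq_self_of_lt (by omega), if_neg hn, hf n (by omega)]

end Reflect

lemma weylSum_eq_sum {f : ℕ → ℂ} {N : ℕ} (hf : ∀ m > N, f m = 0) (a : ℝ) (n : ℕ) :
    weylSum a f n = ∑ j ∈ range (N + 1), (cesK a j : ℂ) * f (j + n) := by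
  refine finsum_eq_sum_of_support_subset _ fun j hj => ?_
  by_contra hjN
  simp only [coe_range, Set.mem_Iio, not_lt] at hjN
  exact hj (by simp [hf (j + n) (by omega)])

noncomputable def weylDiffSeries (α : ℝ) : ℂ⟦X⟧ := (1 - X) * cesSeries ℂ (1 - α)

noncomputable def cesBasis (α : ℝ) (i : ℕ) : ℕ → ℂ :=
  fun n => if n ≤ i then (cesK α (i - n) : ℂ) else 0

noncomputable def convWeight (α : ℝ) (n i j : ℕ) : ℝ :=
  if n ≤ i + j then
    ((if i + j - n ≤ i then 1 else 0) + (if i + j - n ≤ j then 1 else 0) - 1) * cesK α (i + j - n)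
  else 0

lemma cesBasis_eq_zero_of_gt (α : ℝ) (i : ℕ) : ∀ m > i, cesBasis α i m = 0 := fun m hm => by
  rw [cesBasis, if_neg (by omega)]

lemma cesBasis_eq_coeff_reflect (α : ℝ) (i : ℕ) :
    cesBasis α i = (Polynomial.reflect i (trunc (i + 1) (cesSeries ℂ α))).coeff := by
  ext n
  rw [cesBasis, Polynomial.coeff_reflect, coeff_trunc]
  split_ifs with hn hlt hlt
  · rw [Polynomial.revAt_le hn, coeff_cesSeries]; rfl
  · rw [Polynomial.revAt_le hn] at hlt; omega
  · rw [Polynomial.revAt_eq_self_of_lt (by omega)] at hlt; omega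
  · rfl

lemma convWeight_comm (α : ℝ) (n i j : ℕ) : convWeight α n i j = convWeight α n j i := by
  simp only [convWeight, add_comm i j, add_comm (if _ ≤ i then (1 : ℝ) else 0)]

section WeylDifference

variable {α : ℝ} {f g : ℕ → ℂ} {N M : ℕ}

lemma weylDiffSeries_mul_cesSeries (h0 : 0 < α) (h1 : α < 1) :
    weylDiffSeries α * cesSeries ℂ α = 1 := by
  rw [weylDiffSeries, mul_assoc, ← cesSeries_add (by linarith) h0, sub_add_cancel,
    one_sub_X_mul_cesSeries_one]

lemma weylDiff_eq_sum (h0 : 0 < α) (h1 : α < 1) (hf : ∀ m > N, f m = 0) (n : ℕ) :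
    weylDiff α f n = ∑ r ∈ range (N + 1), coeff r (weylDiffSeries α) * f (r + n) := by
  have hfloor : ⌊α⌋₊ = 0 := Nat.floor_eq_zero.mpr h1
  have hshift : ∑ r ∈ range (N + 1), coeff r (X * cesSeries ℂ (1 - α)) * f (r + n) =
      ∑ r ∈ range (N + 1), (cesK (1 - α) r : ℂ) * f (r + (n + 1)) := by
    rw [sum_range_succ', sum_range_succ, hf (N + (n + 1)) (by omega)]
    simp [coeff_succ_X_mul, add_right_comm, add_assoc]
  simp only [weylDiff, h0.ne', if_false, hfloor, fdiff, zero_add, pow_one, Function.iterate_one,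
    Nat.cast_zero, weylSum_eq_sum hf, weylDiffSeries, sub_mul, one_mul, map_sub, sum_sub_distrib]
  rw [hshift]
  simp

lemma weylDiff_eq_zero_of_gt (h0 : 0 < α) (h1 : α < 1) (hf : ∀ m > N, f m = 0) {n : ℕ}
    (hn : N < n) : weylDiff α f n = 0 := by
  rw [weylDiff_eq_sum h0 h1 hf]
  exact sum_eq_zero fun r _ => by rw [hf (r + n) (by omega), mul_zero]

lemma weylDiff_coeff_reflect (h0 : 0 < α) (h1 : α < 1) {d : ℕ} {Q : Polynomial ℂ}
    (hQ : Q.natDegree ≤ d) {n : ℕ} (hn : n ≤ d) :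
    weylDiff α (Q.reflect d).coeff n = coeff (d - n) (weylDiffSeries α * (Q : ℂ⟦X⟧)) := by
  have hvanish := coeff_reflect_eq_zero_of_gt hQ
  rw [weylDiff_eq_sum h0 h1 hvanish, coeff_mul, Nat.sum_antidiagonal_eq_sum_range_succ_mk,
    ← sum_subset (range_subset_range.2 (show d - n + 1 ≤ d + 1 by omega))
      (fun r _ hr => by rw [mem_range] at hr; rw [hvanish (r + n) (by omega), mul_zero])]
  refine sum_congr rfl fun r hr => ?_
  rw [mem_range] at hr
  rw [Polynomial.coeff_reflect, Polynomial.revAt_le (by omega), Polynomial.coeff_coe,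
    show d - (r + n) = d - n - r by omega]

lemma sum_coeff_mul_cesBasis (G : ℂ⟦X⟧) {n : ℕ} (hn : n ≤ N) :
    ∑ i ∈ range (N + 1), coeff (N - i) G * cesBasis α i n = coeff (N - n) (G * cesSeries ℂ α) := by
  have hsupp : ∀ u ∈ range (N + 1), u ∉ range (N - n + 1) →
      coeff u G * cesBasis α (N - u) n = 0 := fun u hu hu' => by
    rw [mem_range] at hu hu'
    rw [cesBasis, if_neg (by omega), mul_zero]
  rw [coeff_mul, Nat.sum_antidiagonal_eq_sum_range_succ_mk]
  calc ∑ i ∈ range (N + 1), coeff (N - i) G * cesBasis α i n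
      = ∑ u ∈ range (N + 1), coeff u G * cesBasis α (N - u) n := by
        rw [← sum_range_reflect]
        refine sum_congr rfl fun u hu => ?_
        rw [mem_range] at hu
        rw [show N + 1 - 1 - u = N - u by omega, Nat.sub_sub_self (by omega)]
    _ = ∑ u ∈ range (N - n + 1), coeff u G * cesBasis α (N - u) n :=
        (sum_subset (range_subset_range.2 (by omega)) hsupp).symm
    _ = _ := sum_congr rfl fun u hu => by
        rw [mem_range] at hu
        rw [cesBasis, if_pos (by omega), coeff_cesSeries, show N - u - n = N - n - u by omega]
        rfl

lemma sum_weylDiff_mul_cesBasis (h0 : 0 < α) (h1 : α < 1) (hf : ∀ m > N, f m = 0) (n : ℕ) :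
    ∑ i ∈ range (N + 1), weylDiff α f i * cesBasis α i n = f n := by
  obtain ⟨Q, hQdeg, hQ⟩ := exists_natDegree_le_coeff_reflect_eq hf
  by_cases hn : n ≤ N
  · calc ∑ i ∈ range (N + 1), weylDiff α f i * cesBasis α i n
        = ∑ i ∈ range (N + 1), coeff (N - i) (weylDiffSeries α * (Q : ℂ⟦X⟧)) * cesBasis α i n :=
          sum_congr rfl fun i hi => by
            rw [← hQ, weylDiff_coeff_reflect h0 h1 hQdeg (Nat.lt_succ_iff.mp (mem_range.mp hi))]
      _ = Q.coeff (N - n) := by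
          rw [sum_coeff_mul_cesBasis _ hn, mul_right_comm, weylDiffSeries_mul_cesSeries h0 h1,
            one_mul, Polynomial.coeff_coe]
      _ = f n := by rw [← hQ, Polynomial.coeff_reflect, Polynomial.revAt_le hn]
  · rw [hf n (by omega)]
    exact sum_eq_zero fun i hi => by
      rw [mem_range] at hi
      rw [cesBasis_eq_zero_of_gt α i n (by omega), mul_zero]

lemma coeff_weylDiffSeries_mul_trunc_mul_trunc (h0 : 0 < α) (h1 : α < 1) {i j s : ℕ}
    (hs : s ≤ i + j) :
    coeff s (weylDiffSeries α * (trunc (i + 1) (cesSeries ℂ α) : ℂ⟦X⟧) *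
        (trunc (j + 1) (cesSeries ℂ α) : ℂ⟦X⟧)) =
      (((if s ≤ i then 1 else 0) + (if s ≤ j then 1 else 0) - 1) * cesK α s : ℝ) := by
  set K := cesSeries ℂ α
  set T : ℕ → ℂ⟦X⟧ := fun k => trunc (k + 1) K
  have htail : ∀ k, X ^ (k + 1) ∣ K - T k := fun k =>
    X_pow_dvd_iff.2 fun m hm => by simp [T, coeff_trunc, hm]
  have hcoeff_tail : ∀ k, coeff s (K - T k) = if s ≤ k then 0 else (cesK α s : ℂ) :=
    fun k => by
      simp only [map_sub, coeff_cesSeries, Complex.coe_algebraMap, Polynomial.coeff_coe,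
        coeff_trunc, Order.lt_add_one_iff, K, T]
      split_ifs <;> simp
  obtain ⟨A, hA⟩ := htail i
  obtain ⟨B, hB⟩ := htail j
  have hsplit : weylDiffSeries α * T i * T j =
      K - (K - T i) - (K - T j) + X ^ (i + j + 2) * (weylDiffSeries α * A * B) := by
    linear_combination (K - (K - T i) - (K - T j)) * weylDiffSeries_mul_cesSeries h0 h1
      + weylDiffSeries α * (K - T j) * hA + weylDiffSeries α * X ^ (i + 1) * A * hB
  rw [hsplit, map_add, map_sub, map_sub, hcoeff_tail, hcoeff_tail, coeff_X_pow_mul',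
    if_neg (show ¬ i + j + 2 ≤ s by omega), coeff_cesSeries]
  split_ifs <;> simp

lemma weylDiff_conv_cesBasis (h0 : 0 < α) (h1 : α < 1) (i j n : ℕ) :
    weylDiff α (conv (cesBasis α i) (cesBasis α j)) n = convWeight α n i j := by
  have hdeg : ∀ k, (trunc (k + 1) (cesSeries ℂ α)).natDegree ≤ k := fun k =>
    Nat.lt_succ_iff.mp (natDegree_trunc_lt _ k)
  rw [cesBasis_eq_coeff_reflect, cesBasis_eq_coeff_reflect, conv_coeff,
    ← Polynomial.reflect_mul _ _ (hdeg i) (hdeg j), convWeight]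
  have hdeg_mul := Polynomial.natDegree_mul_le.trans (add_le_add (hdeg i) (hdeg j))
  by_cases hn : n ≤ i + j
  · rw [if_pos hn, weylDiff_coeff_reflect h0 h1 hdeg_mul hn, Polynomial.coe_mul, ← mul_assoc,
      coeff_weylDiffSeries_mul_trunc_mul_trunc h0 h1 (Nat.sub_le _ _)]
  · rw [if_neg hn, weylDiff_eq_zero_of_gt h0 h1 (coeff_reflect_eq_zero_of_gt hdeg_mul) (by omega),
      Complex.ofReal_zero]

lemma conv_eq_sum_conv_cesBasis (h0 : 0 < α) (h1 : α < 1) (hf : ∀ m > N, f m = 0)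
    (hg : ∀ m > M, g m = 0) (m : ℕ) :
    conv f g m = ∑ i ∈ range (N + 1), ∑ j ∈ range (M + 1),
      weylDiff α f i * weylDiff α g j * conv (cesBasis α i) (cesBasis α j) m := by
  calc conv f g m
      = ∑ q ∈ range (m + 1), ∑ i ∈ range (N + 1), ∑ j ∈ range (M + 1),
          weylDiff α f i * weylDiff α g j * (cesBasis α i (m - q) * cesBasis α j q) := by
        refine sum_congr rfl fun q _ => ?_
        rw [← sum_weylDiff_mul_cesBasis h0 h1 hf, ← sum_weylDiff_mul_cesBasis h0 h1 hg,
          sum_mul_sum]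
        exact sum_congr rfl fun i _ => sum_congr rfl fun j _ => by ring
    _ = _ := by
        rw [sum_comm]
        refine sum_congr rfl fun i _ => ?_
        rw [sum_comm]
        exact sum_congr rfl fun j _ => by rw [conv, mul_sum]

lemma weylDiff_conv_eq_sum (h0 : 0 < α) (h1 : α < 1) (hf : ∀ m > N, f m = 0)
    (hg : ∀ m > M, g m = 0) (n : ℕ) :
    weylDiff α (conv f g) n = ∑ i ∈ range (N + 1), ∑ j ∈ range (M + 1),
      weylDiff α f i * weylDiff α g j * convWeight α n i j := by
  have hbasis : ∀ i ∈ range (N + 1), ∀ j ∈ range (M + 1),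
      ∀ m > N + M, conv (cesBasis α i) (cesBasis α j) m = 0 := fun i hi j hj m hm => by
    rw [mem_range] at hi hj
    exact conv_eq_zero_of_gt (cesBasis_eq_zero_of_gt α i) (cesBasis_eq_zero_of_gt α j) m
      (by omega)
  calc weylDiff α (conv f g) n
      = ∑ r ∈ range (N + M + 1), ∑ i ∈ range (N + 1), ∑ j ∈ range (M + 1),
          weylDiff α f i * weylDiff α g j *
            (coeff r (weylDiffSeries α) * conv (cesBasis α i) (cesBasis α j) (r + n)) := by
        rw [weylDiff_eq_sum h0 h1 (conv_eq_zero_of_gt hf hg)]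
        refine sum_congr rfl fun r _ => ?_
        rw [conv_eq_sum_conv_cesBasis h0 h1 hf hg, mul_sum]
        exact sum_congr rfl fun i _ => by rw [mul_sum]; exact sum_congr rfl fun j _ => by ring
    _ = ∑ i ∈ range (N + 1), ∑ j ∈ range (M + 1),
          weylDiff α f i * weylDiff α g j * weylDiff α (conv (cesBasis α i) (cesBasis α j)) n := by
        rw [sum_comm]
        refine sum_congr rfl fun i hi => ?_
        rw [sum_comm]
        refine sum_congr rfl fun j hj => ?_
        rw [weylDiff_eq_sum h0 h1 (hbasis i hi j hj), mul_sum]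
    _ = _ := by simp_rw [weylDiff_conv_cesBasis h0 h1]

end WeylDifference

section ConvWeightBound

variable {α : ℝ}

lemma sum_cesK_mul_abs_convWeight_le_of_le (h0 : 0 < α) (h1 : α ≤ 1) {i j : ℕ} (hij : i ≤ j) :
    ∑ n ∈ range (i + j + 1), cesK (α + 1) n * |convWeight α n i j| ≤
      (2 * ((3 + α) / (1 + α)) ^ α - 1) * (cesK (α + 1) i * cesK (α + 1) j) := by
  set Λ := ((3 + α) / (1 + α)) ^ α
  have hk1 : ∀ m, 0 < cesK (α + 1) m := cesK_pos (by linarith)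
  have hk : ∀ m, 0 < cesK α m := cesK_pos h0
  -- The weight at `n` is `-cesK α (i + j - n)` for `n < i`, `0` for `i ≤ n < j`,
  -- and `cesK α (i + j - n)` for `j ≤ n ≤ i + j`.
  have hlow : ∑ n ∈ range i, cesK (α + 1) n * |convWeight α n i j| ≤
      α / (1 + α) * (cesK (α + 1) i * cesK (α + 1) j) := by
    calc ∑ n ∈ range i, cesK (α + 1) n * |convWeight α n i j|
        ≤ ∑ n ∈ range i, cesK (α + 1) n * cesK α (j + 1) := by
          refine sum_le_sum fun n hn => ?_
          rw [mem_range] at hn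
          rw [convWeight, if_pos (by omega), if_neg (by omega), if_neg (by omega), zero_add,
            zero_sub, neg_one_mul, abs_neg, abs_of_pos (hk _)]
          exact mul_le_mul_of_nonneg_left (cesK_antitone h0 h1 (by omega)) (hk1 n).le
      _ = i / (j + 1) * (α / (1 + α) * (cesK (α + 1) i * cesK (α + 1) j)) := by
          rw [← sum_mul, sum_range_cesK (by linarith), cesK_succ_eq_mul_cesK_add_one h0]
          field_simp
          ring
      _ ≤ α / (1 + α) * (cesK (α + 1) i * cesK (α + 1) j) := by
          have : (i : ℝ) ≤ j + 1 := by exact_mod_cast hij.trans j.le_succ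
          refine mul_le_of_le_one_left (by have := hk1 i; have := hk1 j; positivity) ?_
          exact (div_le_one (by positivity)).2 this
  have hmid : ∑ v ∈ range (j - i), cesK (α + 1) (i + v) * |convWeight α (i + v) i j| = 0 :=
    sum_eq_zero fun v hv => by
      rw [mem_range] at hv
      rw [convWeight, if_pos (by omega), if_neg (by omega), if_pos (by omega)]
      simp
  have hhigh : ∑ u ∈ range (i + 1),
      cesK (α + 1) (i + (j - i) + u) * |convWeight α (i + (j - i) + u) i j| ≤
        Λ * (cesK (α + 1) i * cesK (α + 1) j) := by
    calc ∑ u ∈ range (i + 1),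
          cesK (α + 1) (i + (j - i) + u) * |convWeight α (i + (j - i) + u) i j|
        ≤ ∑ u ∈ range (i + 1), Λ * cesK (α + 1) j * cesK α (i - u) := by
          refine sum_le_sum fun u hu => ?_
          rw [mem_range] at hu
          rw [convWeight, if_pos (by omega), if_pos (by omega), if_pos (by omega),
            show i + j - (i + (j - i) + u) = i - u by omega, show i + (j - i) + u = j + u by omega]
          rw [add_sub_cancel_right, one_mul, abs_of_pos (hk _)]
          exact mul_le_mul_of_nonneg_right (cesK_add_one_add_le_of_le h0 h1 (by omega))
            (hk _).le
      _ = Λ * (cesK (α + 1) i * cesK (α + 1) j) := by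
          have hrefl : ∑ u ∈ range (i + 1), cesK α (i - u) = ∑ u ∈ range (i + 1), cesK α u := by
            simpa using sum_range_reflect (cesK α) (i + 1)
          rw [← mul_sum, hrefl, sum_range_succ_cesK h0]
          ring
  have hΛ : 1 + α / (1 + α) ≤ Λ := by
    have := one_add_le_rpow h0 h1
    have : α / (1 + α) ≤ α := div_le_self h0.le (by linarith)
    linarith
  rw [show i + j + 1 = i + (j - i) + (i + 1) by omega, sum_range_add, sum_range_add, hmid,
    add_zero]
  have := mul_pos (hk1 i) (hk1 j)
  nlinarith

lemma sum_cesK_mul_abs_convWeight_le (h0 : 0 < α) (h1 : α ≤ 1) {i j R : ℕ} (hR : i + j < R) :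
    ∑ n ∈ range R, cesK (α + 1) n * |convWeight α n i j| ≤
      (2 * ((3 + α) / (1 + α)) ^ α - 1) * (cesK (α + 1) i * cesK (α + 1) j) := by
  rw [← sum_subset (range_subset_range.2 (show i + j + 1 ≤ R by omega)) fun n _ hn => by
    rw [mem_range] at hn
    rw [convWeight, if_neg (by omega), abs_zero, mul_zero]]
  rcases le_total i j with hij | hji
  · exact sum_cesK_mul_abs_convWeight_le_of_le h0 h1 hij
  · simpa only [convWeight_comm α _ i j, add_comm j i, mul_comm (cesK (α + 1) j)] using
      sum_cesK_mul_abs_convWeight_le_of_le h0 h1 hji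

end ConvWeightBound

lemma sum_mul_norm_sum_sum_le {u s t : Finset ℕ} {ρ : ℕ → ℝ} (hρ : ∀ n ∈ u, 0 ≤ ρ n)
    (a b : ℕ → ℂ) (w : ℕ → ℕ → ℕ → ℝ) {C : ℝ}
    (hw : ∀ i ∈ s, ∀ j ∈ t, ∑ n ∈ u, ρ n * |w n i j| ≤ C * (ρ i * ρ j)) :
    ∑ n ∈ u, ρ n * ‖∑ i ∈ s, ∑ j ∈ t, a i * b j * w n i j‖ ≤
      C * (∑ i ∈ s, ρ i * ‖a i‖) * (∑ j ∈ t, ρ j * ‖b j‖) := by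
  calc ∑ n ∈ u, ρ n * ‖∑ i ∈ s, ∑ j ∈ t, a i * b j * w n i j‖
      ≤ ∑ n ∈ u, ∑ i ∈ s, ∑ j ∈ t, ‖a i‖ * ‖b j‖ * (ρ n * |w n i j|) := by
        refine sum_le_sum fun n hn => ?_
        have hnorm : ‖∑ i ∈ s, ∑ j ∈ t, a i * b j * w n i j‖ ≤
            ∑ i ∈ s, ∑ j ∈ t, ‖a i‖ * ‖b j‖ * |w n i j| :=
          (norm_sum_le _ _).trans <| sum_le_sum fun i _ => (norm_sum_le _ _).trans_eq <|
            sum_congr rfl fun j _ => by rw [norm_mul, norm_mul, Complex.norm_real, Real.norm_eq_abs]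
        refine (mul_le_mul_of_nonneg_left hnorm (hρ n hn)).trans_eq ?_
        simp_rw [mul_sum]
        exact sum_congr rfl fun i _ => sum_congr rfl fun j _ => by ring
    _ = ∑ i ∈ s, ∑ j ∈ t, ‖a i‖ * ‖b j‖ * ∑ n ∈ u, ρ n * |w n i j| := by
        rw [sum_comm]
        refine sum_congr rfl fun i _ => ?_
        rw [sum_comm]
        exact sum_congr rfl fun j _ => by rw [mul_sum]
    _ ≤ ∑ i ∈ s, ∑ j ∈ t, ‖a i‖ * ‖b j‖ * (C * (ρ i * ρ j)) :=
        sum_le_sum fun i hi => sum_le_sum fun j hj =>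
          mul_le_mul_of_nonneg_left (hw i hi j hj) (by positivity)
    _ = C * (∑ i ∈ s, ρ i * ‖a i‖) * (∑ j ∈ t, ρ j * ‖b j‖) := by
        rw [mul_assoc, sum_mul_sum, mul_sum]
        exact sum_congr rfl fun i _ => by rw [mul_sum]; exact sum_congr rfl fun j _ => by ring

lemma qA_eq_sum {α : ℝ} (h0 : 0 < α) (h1 : α < 1) {f : ℕ → ℂ} {N : ℕ} (hf : ∀ m > N, f m = 0) :
    qA α f = ∑ n ∈ range (N + 1), cesK (α + 1) n * ‖weylDiff α f n‖ :=
  finsum_eq_sum_of_support_subset _ fun n hn => by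
    by_contra hnN
    simp only [coe_range, Set.mem_Iio, not_lt] at hnN
    exact hn (by simp [weylDiff_eq_zero_of_gt h0 h1 hf (by omega : N < n)])

lemma two_rpow_add_one_mul_rpow_eq {α : ℝ} (h0 : 0 < α) :
    (2 : ℝ) ^ (α + 1) * (1 + (1 - α) / (2 * (1 + α))) ^ α = 2 * ((3 + α) / (1 + α)) ^ α := by
  rw [show 1 + (1 - α) / (2 * (1 + α)) = (3 + α) / (1 + α) / 2 by field_simp; ring,
    Real.div_rpow (by positivity) zero_le_two, Real.rpow_add_one two_ne_zero]
  field_simp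

theorem stmt13 (α : ℝ) (h0 : 0 < α) (h1 : α < 1) (f g : ℕ → ℂ)
    (hf : (Function.support f).Finite) (hg : (Function.support g).Finite) :
    qA α (fun n => conv f g n) ≤
      ((2 : ℝ) ^ (α + 1) * (1 + (1 - α) / (2 * (1 + α))) ^ α - 1) * qA α f * qA α g := by
  obtain ⟨N, hN⟩ := exists_forall_gt_eq_zero hf
  obtain ⟨M, hM⟩ := exists_forall_gt_eq_zero hg
  rw [qA_eq_sum h0 h1 (conv_eq_zero_of_gt hN hM), qA_eq_sum h0 h1 hN, qA_eq_sum h0 h1 hM,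
    two_rpow_add_one_mul_rpow_eq h0]
  simp_rw [weylDiff_conv_eq_sum h0 h1 hN hM]
  refine sum_mul_norm_sum_sum_le (fun n _ => (cesK_pos (by linarith) n).le) _ _ _
    fun i hi j hj => sum_cesK_mul_abs_convWeight_le h0 h1.le ?_
  rw [mem_range] at hi hj
  omega
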